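/- arXiv:1711.09486 — 3 statements merged into one kernel-verified Lean document; each statement's English description precedes it below -/
import Mathlib

section
/- Let G be a group, H ⊴ G a finite-index normal subgroup generated by X, and Y a finite transversal of H in G containing 1. Assume there is A ≥ 0 such that ℓ_X(y⁻¹ x y) ≤ A for all x ∈ X ∪ X⁻¹ and y ∈ Y. Then there exists C > 0 such that ℓ_X(h) ≤ C·ℓ_{X∪Y}(h) for all h ∈ H. -/
/-- Word length of `g` with respect to a subset `X` of a group. -/
noncomputable def wordLength {G : Type*} [Group G] (X : Set G) (g : G) : ℕ :=
  sInf {n | ∃ l : List G, l.length = n ∧ (∀ x ∈ l, x ∈ X ∨ x⁻¹ ∈ X) ∧ l.prod = g}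

/-!
Read a word `a₁ ⋯ aₙ` over `X ∪ Y` for `h ∈ H` letter by letter while tracking cosets: from
`y ∈ Y` the letter `a` leads to the representative `z ∈ Y` of `y⁻¹ a`, and `y⁻¹ a z ∈ H`. For
`a ∈ X ∪ X⁻¹` normality gives `z = y`, so `y⁻¹ a y` has `X`-length at most `A`; for
`a ∈ Y ∪ Y⁻¹` the element `y⁻¹ a z` ranges over a finite set, so its `X`-length is bounded too.
Starting and (since `h ∈ H`) ending at `1`, the word telescopes into a product of `n` such
pieces, whence `ℓ_X(h) ≤ C n`.
-/

section WordLength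

variable {G : Type*} [Group G] {X : Set G}

theorem wordLength_le_length {l : List G} (hl : ∀ x ∈ l, x ∈ X ∨ x⁻¹ ∈ X) :
    wordLength X l.prod ≤ l.length :=
  Nat.sInf_le ⟨l, rfl, hl, rfl⟩

theorem exists_word_of_mem_closure {g : G} (hg : g ∈ Subgroup.closure X) :
    ∃ l : List G, l.length = wordLength X g ∧ (∀ x ∈ l, x ∈ X ∨ x⁻¹ ∈ X) ∧ l.prod = g := by
  rw [← Subgroup.mem_toSubmonoid, Subgroup.closure_toSubmonoid] at hg
  obtain ⟨l, hl, rfl⟩ := Submonoid.exists_list_of_mem_closure hg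
  exact Nat.sInf_mem (s := {n | ∃ l' : List G, l'.length = n ∧
    (∀ x ∈ l', x ∈ X ∨ x⁻¹ ∈ X) ∧ l'.prod = l.prod}) ⟨l.length, l, rfl, hl, rfl⟩

theorem wordLength_one : wordLength X 1 = 0 :=
  Nat.le_zero.mp (wordLength_le_length (l := []) (by simp))

theorem wordLength_mul_le {g g' : G} (hg : g ∈ Subgroup.closure X)
    (hg' : g' ∈ Subgroup.closure X) :
    wordLength X (g * g') ≤ wordLength X g + wordLength X g' := by
  obtain ⟨l, hlen, hl, rfl⟩ := exists_word_of_mem_closure hg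
  obtain ⟨l', hlen', hl', rfl⟩ := exists_word_of_mem_closure hg'
  rw [← hlen, ← hlen', ← List.length_append, ← List.prod_append]
  exact wordLength_le_length fun x hx => (List.mem_append.mp hx).elim (hl x) (hl' x)

theorem exists_wordLength_conj_prod_le {S Y : Set G} {K : ℕ}
    (hstep : ∀ y ∈ Y, ∀ a, a ∈ S ∨ a⁻¹ ∈ S →
      ∃ z ∈ Y, y⁻¹ * a * z ∈ Subgroup.closure X ∧ wordLength X (y⁻¹ * a * z) ≤ K)
    (l : List G) (hl : ∀ a ∈ l, a ∈ S ∨ a⁻¹ ∈ S) :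
    ∀ y ∈ Y, ∃ z ∈ Y, y⁻¹ * l.prod * z ∈ Subgroup.closure X ∧
      wordLength X (y⁻¹ * l.prod * z) ≤ K * l.length := by
  induction l with
  | nil => exact fun y hy => ⟨y, hy, by simp [wordLength_one]⟩
  | cons a l ih =>
    intro y hy
    obtain ⟨z, hz, haz, hlen_a⟩ := hstep y hy a (hl a List.mem_cons_self)
    obtain ⟨w, hw, hlw, hlen_l⟩ := ih (fun b hb => hl b (List.mem_cons_of_mem a hb)) z hz
    have hsplit : y⁻¹ * (a :: l).prod * w = (y⁻¹ * a * z) * (z⁻¹ * l.prod * w) := by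
      simp only [List.prod_cons]; group
    refine ⟨w, hw, hsplit ▸ mul_mem haz hlw, ?_⟩
    calc wordLength X (y⁻¹ * (a :: l).prod * w)
        ≤ wordLength X (y⁻¹ * a * z) + wordLength X (z⁻¹ * l.prod * w) :=
          hsplit ▸ wordLength_mul_le haz hlw
      _ ≤ K + K * l.length := add_le_add hlen_a hlen_l
      _ = K * (a :: l).length := by rw [List.length_cons]; ring

end WordLength

theorem exists_bound_wordLength_transitions {G : Type*} [Group G] {H : Subgroup G} [H.Normal]
    {X Y : Set G} (hXgen : Subgroup.closure X = H) (hYfin : Y.Finite)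
    (hYrep : ∀ g : G, ∃ y ∈ Y, g * y ∈ H) {A : ℕ}
    (hA : ∀ x ∈ X ∪ X⁻¹, ∀ y ∈ Y, wordLength X (y⁻¹ * x * y) ≤ A) :
    ∃ K, ∀ y ∈ Y, ∀ a, a ∈ X ∪ Y ∨ a⁻¹ ∈ X ∪ Y →
      ∃ z ∈ Y, y⁻¹ * a * z ∈ H ∧ wordLength X (y⁻¹ * a * z) ≤ K := by
  set T : Set G := (fun p : G × G × G => p.1⁻¹ * p.2.1 * p.2.2) '' (Y ×ˢ ((Y ∪ Y⁻¹) ×ˢ Y))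
  have hTfin : T.Finite := (hYfin.prod ((hYfin.union hYfin.inv).prod hYfin)).image _
  obtain ⟨B, hB⟩ := (hTfin.image (wordLength X)).bddAbove
  refine ⟨max A B, fun y hy a ha => ?_⟩
  by_cases haX : a ∈ X ∪ X⁻¹
  · have haH : a ∈ H := by
      rcases haX with ha | ha
      · exact hXgen ▸ Subgroup.subset_closure ha
      · exact inv_inv a ▸ H.inv_mem (hXgen ▸ Subgroup.subset_closure ha)
    exact ⟨y, hy, ‹H.Normal›.conj_mem' a haH y,
      (hA a haX y hy).trans (le_max_left A B)⟩
  · have haY : a ∈ Y ∪ Y⁻¹ := by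
      simp only [Set.mem_union, Set.mem_inv] at ha haX ⊢
      tauto
    obtain ⟨z, hz, hazH⟩ := hYrep (y⁻¹ * a)
    exact ⟨z, hz, hazH, (hB ⟨_, ⟨(y, a, z), ⟨hy, haY, hz⟩, rfl⟩, rfl⟩).trans (le_max_right A B)⟩

theorem undistorted_of_bounded_conjugates_general {G : Type*} [Group G] (H : Subgroup G)
    [H.Normal]
    (X Y : Set G) (hXgen : Subgroup.closure X = H)
    (hYfin : Y.Finite) (hYtrans : ∀ g : G, ∃! y, y ∈ Y ∧ g * y ∈ H) (h1Y : (1 : G) ∈ Y)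
    (A : ℕ) (hA : ∀ x ∈ X ∪ X⁻¹, ∀ y ∈ Y, wordLength X (y⁻¹ * x * y) ≤ A) :
    ∃ C : ℕ, 0 < C ∧ ∀ h ∈ H, wordLength X h ≤ C * wordLength (X ∪ Y) h := by
  obtain ⟨K, hK⟩ :=
    exists_bound_wordLength_transitions hXgen hYfin (fun g => (hYtrans g).exists) hA
  subst hXgen
  refine ⟨K + 1, K.succ_pos, fun h hh => ?_⟩
  obtain ⟨l, hlen, hl, rfl⟩ :=
    exists_word_of_mem_closure (Subgroup.closure_mono Set.subset_union_left hh)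
  obtain ⟨z, hz, hlz, hlen_z⟩ := exists_wordLength_conj_prod_le hK l hl 1 h1Y
  -- `z ∈ Y ∩ H`, and `1` is the representative of the coset `H`.
  have hz1 : z = 1 := (hYtrans 1).unique
    ⟨hz, by simpa using (Subgroup.mul_mem_cancel_left _ hh).mp (by simpa using hlz)⟩
    ⟨h1Y, by simp⟩
  subst hz1
  calc wordLength X l.prod ≤ K * l.length := by simpa using hlen_z
    _ ≤ (K + 1) * wordLength (X ∪ Y) l.prod := by rw [hlen]; gcongr; omega

/-- If `H ⊴ G` has finite index, `X` generates `H`, `Y` is a finite transversal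
containing `1`, and conjugation by elements of `Y` distorts `X`-letters by at most `A`,
then there is `C > 0` with `ℓ_X(h) ≤ C ℓ_{X∪Y}(h)` for all `h ∈ H`. -/
theorem undistorted_of_bounded_conjugates {G : Type*} [Group G] (H : Subgroup G)
    [H.Normal] (hfin : H.FiniteIndex)
    (X Y : Set G) (hXH : X ⊆ (H : Set G)) (hXgen : Subgroup.closure X = H)
    (hYfin : Y.Finite) (hYtrans : ∀ g : G, ∃! y, y ∈ Y ∧ g * y ∈ H) (h1Y : (1 : G) ∈ Y)
    (A : ℕ) (hA : ∀ x ∈ X ∪ X⁻¹, ∀ y ∈ Y, wordLength X (y⁻¹ * x * y) ≤ A) :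
    ∃ C : ℕ, 0 < C ∧ ∀ h ∈ H, wordLength X h ≤ C * wordLength (X ∪ Y) h :=
  undistorted_of_bounded_conjugates_general H X Y hXgen hYfin hYtrans h1Y A hA
end

section
/- Let G be a group acting by isometries on a metric space (S,d), ε > 0, s ∈ S, z ∈ G, and w ∈ G with d(z·s, w·s) ≤ 1. Suppose y, h₀, h ∈ G with d(s, y·h₀·s) ≤ ε, d(z·s, y·h₀·z·s) ≤ ε, d(s, y·h·s) ≤ ε, and d(z·s, y·h·z·s) ≤ ε. Then d(w·s, h₀⁻¹hw·s) ≤ 2ε + 2 and d(s, h₀⁻¹h·s) ≤ 2ε. -/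
/-- Key estimate: if `y h₀` and `y h` both `ε`-coarsely stabilize the pair `(s, z • s)`
and `d(z • s, w • s) ≤ 1`, then `h₀⁻¹ h` coarsely stabilizes `(s, w • s)` with
constants `2ε` and `2ε + 2`. -/
theorem coarse_stabilizer_transfer {G S : Type*} [Group G] [MetricSpace S]
    [MulAction G S] (hiso : ∀ g : G, Isometry (fun x : S => g • x))
    (ε : ℝ) (hε : 0 < ε) (s : S) (z w y h₀ h : G)
    (hzw : dist (z • s) (w • s) ≤ 1)
    (h₀1 : dist s ((y * h₀) • s) ≤ ε) (h₀2 : dist (z • s) ((y * h₀ * z) • s) ≤ ε)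
    (hh1 : dist s ((y * h) • s) ≤ ε) (hh2 : dist (z • s) ((y * h * z) • s) ≤ ε) :
    dist (w • s) ((h₀⁻¹ * h * w) • s) ≤ 2 * ε + 2 ∧
      dist s ((h₀⁻¹ * h) • s) ≤ 2 * ε := by
  have key : ∀ x : S, dist x ((h₀⁻¹ * h) • x) = dist ((y * h₀) • x) ((y * h) • x) := by
    intro x
    have := (hiso (y * h₀)).dist_eq x ((h₀⁻¹ * h) • x)
    rw [← this, ← mul_smul]
    congr 2
    group
  have hs : dist s ((h₀⁻¹ * h) • s) ≤ 2 * ε := by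
    rw [key s]
    calc dist ((y * h₀) • s) ((y * h) • s)
        ≤ dist ((y * h₀) • s) s + dist s ((y * h) • s) := dist_triangle _ _ _
      _ ≤ ε + ε := by rw [dist_comm]; exact add_le_add h₀1 hh1
      _ = 2 * ε := by ring
  refine ⟨?_, hs⟩
  have hz : dist (z • s) ((h₀⁻¹ * h) • z • s) ≤ 2 * ε := by
    rw [key (z • s)]
    have e1 : (y * h₀) • z • s = (y * h₀ * z) • s := by rw [← mul_smul]
    have e2 : (y * h) • z • s = (y * h * z) • s := by rw [← mul_smul]
    rw [e1, e2]
    calc dist ((y * h₀ * z) • s) ((y * h * z) • s)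
        ≤ dist ((y * h₀ * z) • s) (z • s) + dist (z • s) ((y * h * z) • s) :=
          dist_triangle _ _ _
      _ ≤ ε + ε := by rw [dist_comm]; exact add_le_add h₀2 hh2
      _ = 2 * ε := by ring
  have e3 : (h₀⁻¹ * h * w) • s = (h₀⁻¹ * h) • w • s := by rw [← mul_smul]
  have e4 : dist ((h₀⁻¹ * h) • z • s) ((h₀⁻¹ * h) • w • s) = dist (z • s) (w • s) :=
    (hiso (h₀⁻¹ * h)).dist_eq _ _
  calc dist (w • s) ((h₀⁻¹ * h * w) • s)
      ≤ dist (w • s) (z • s) + dist (z • s) ((h₀⁻¹ * h) • z • s)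
        + dist ((h₀⁻¹ * h) • z • s) ((h₀⁻¹ * h * w) • s) := dist_triangle4 _ _ _ _
    _ ≤ 1 + 2 * ε + 1 := by
        rw [e3, e4]
        have h1 : dist (w • s) (z • s) ≤ 1 := by rw [dist_comm]; exact hzw
        gcongr
    _ = 2 * ε + 2 := by ring
end

section
/- Let G be a group that splits as an HNN extension of a finitely generated group A with associated subgroup equal to all of A (i.e., A = C in the HNN extension G = ⟨A, t | t⁻¹ct = φ(c), c ∈ C⟩ with C = A), and let ε: G → ℤ be the homomorphism sending A to 0 and t to 1. Then for every n ≥ 1, the subgroup K_n = ε⁻¹(nℤ) is generated by A and tⁿ; in particular, if A is generated by d elements, then every K_n is generated by at most d + 1 elements. -/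
/-- Ascending HNN extension (`t⁻¹ A t ⊆ A`, `G = ⟨A, t⟩`): with `ε : G → ℤ` killing `A`
and sending `t` to `1`, every `K_n = ε⁻¹(nℤ)` is generated by `A` and `tⁿ`; in
particular if `A` is generated by `d` elements then each `K_n` is generated by at
most `d + 1` elements. -/
theorem ascending_hnn_finite_index_gen {G : Type*} [Group G] (A : Subgroup G) (t : G)
    (hasc : ∀ a ∈ A, t⁻¹ * a * t ∈ A)
    (hgen : A ⊔ Subgroup.closure {t} = ⊤)
    (ε : G →* Multiplicative ℤ) (hA : ∀ a ∈ A, ε a = 1)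
    (ht : ε t = Multiplicative.ofAdd 1) :
    ∀ n : ℕ, 1 ≤ n →
      Subgroup.comap ε (AddSubgroup.toSubgroup (AddSubgroup.zmultiples (n : ℤ))) =
        A ⊔ Subgroup.closure {t ^ n} ∧
      ∀ d : ℕ, (∃ S : Finset G, S.card = d ∧ Subgroup.closure (S : Set G) = A) →
        ∃ T : Finset G, T.card ≤ d + 1 ∧ Subgroup.closure (T : Set G) =
          Subgroup.comap ε (AddSubgroup.toSubgroup (AddSubgroup.zmultiples (n : ℤ))) := by
  -- conjugation by nonnegative powers of t maps A into A
  have hconj : ∀ (m : ℕ), ∀ a ∈ A, (t ^ (m : ℤ))⁻¹ * a * t ^ (m : ℤ) ∈ A := by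
    intro m
    induction m with
    | zero => intro a ha; simpa using ha
    | succ m ih =>
      intro a ha
      have h1 : t⁻¹ * ((t ^ (m : ℤ))⁻¹ * a * t ^ (m : ℤ)) * t ∈ A :=
        hasc _ (ih a ha)
      have h2 : (t ^ ((m : ℤ) + 1))⁻¹ * a * t ^ ((m : ℤ) + 1)
          = t⁻¹ * ((t ^ (m : ℤ))⁻¹ * a * t ^ (m : ℤ)) * t := by
        group
      push_cast
      rw [h2]
      exact h1
  -- normal form : every g is t^k * a * t^j with k : ℕ, a ∈ A, j : ℤ
  have hform : ∀ g : G, ∃ (k : ℕ) (a : G) (j : ℤ), a ∈ A ∧ g = t ^ (k : ℤ) * a * t ^ j := by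
    intro g
    have hg : g ∈ Subgroup.closure ((A : Set G) ∪ {t}) := by
      rw [Subgroup.closure_union, Subgroup.closure_eq, hgen]
      trivial
    induction hg using Subgroup.closure_induction with
    | mem x hx =>
      rcases hx with hx | hx
      · exact ⟨0, x, 0, hx, by group⟩
      · exact ⟨0, 1, 1, A.one_mem, by simp at hx; rw [hx]; group⟩
    | one => exact ⟨0, 1, 0, A.one_mem, by group⟩
    | mul x y _ _ hx hy =>
      obtain ⟨k, a, j, ha, rfl⟩ := hx
      obtain ⟨k', a', j', ha', rfl⟩ := hy
      rcases le_or_gt 0 (j + k') with hs | hs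
      · refine ⟨k + (j + k').toNat, (t ^ (j + k'))⁻¹ * a * t ^ (j + k') * a', j',
          A.mul_mem ?_ ha', ?_⟩
        · have := hconj (j + k').toNat a ha
          rwa [Int.toNat_of_nonneg hs] at this
        · push_cast [Int.toNat_of_nonneg hs]
          group
      · refine ⟨k, a * (t ^ (-(j + k')))⁻¹ * a' * t ^ (-(j + k')), j + k' + j',
          ?_, ?_⟩
        · have h1 := hconj (-(j + k')).toNat a' ha'
          rw [Int.toNat_of_nonneg (by omega)] at h1
          have : a * (t ^ (-(j + k')))⁻¹ * a' * t ^ (-(j + k'))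
              = a * ((t ^ (-(j + k')))⁻¹ * a' * t ^ (-(j + k'))) := by group
          rw [this]
          exact A.mul_mem ha h1
        · group
    | inv x _ hx =>
      obtain ⟨k, a, j, ha, rfl⟩ := hx
      rcases le_or_gt j 0 with hj | hj
      · refine ⟨(-j).toNat, a⁻¹, -k, A.inv_mem ha, ?_⟩
        rw [Int.toNat_of_nonneg (by omega)]
        group
      · refine ⟨0, (t ^ j)⁻¹ * a⁻¹ * t ^ j, -j - k, ?_, ?_⟩
        · have := hconj j.toNat a⁻¹ (A.inv_mem ha)
          rwa [Int.toNat_of_nonneg (by omega)] at this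
        · group
  intro n hn
  have key : Subgroup.comap ε (AddSubgroup.toSubgroup (AddSubgroup.zmultiples (n : ℤ))) =
      A ⊔ Subgroup.closure {t ^ n} := by
    apply le_antisymm
    · intro g hg
      have hmem : (Multiplicative.toAdd (ε g)) ∈ AddSubgroup.zmultiples (n : ℤ) := hg
      obtain ⟨c, hc⟩ := hmem
      simp only [smul_eq_mul] at hc
      obtain ⟨k, a, j, ha, rfl⟩ := hform g
      have hε : Multiplicative.toAdd (ε (t ^ (k : ℤ) * a * t ^ j)) = k + j := by
        simp [map_mul, map_zpow, hA a ha, ht]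
      rw [hε] at hc
      -- g = t^(k*n) * a' * t^(k + j - k*n), with a' ∈ A
      have ha' : (t ^ ((k : ℤ) * n - k))⁻¹ * a * t ^ ((k : ℤ) * n - k) ∈ A := by
        have h0 : (0 : ℤ) ≤ (k : ℤ) * n - k := by
          have : (k : ℤ) * 1 ≤ (k : ℤ) * n := by
            apply mul_le_mul_of_nonneg_left (by exact_mod_cast hn) (by positivity)
          omega
        have := hconj ((k : ℤ) * n - k).toNat a ha
        rwa [Int.toNat_of_nonneg h0] at this
      have hdecomp : t ^ (k : ℤ) * a * t ^ j =
          t ^ ((k : ℤ) * n) * ((t ^ ((k : ℤ) * n - k))⁻¹ * a * t ^ ((k : ℤ) * n - k))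
            * t ^ ((k : ℤ) + j - k * n) := by
        group
      rw [hdecomp]
      have htn : ∀ m : ℤ, t ^ ((m : ℤ) * n) ∈ Subgroup.closure {t ^ n} := by
        intro m
        have : t ^ ((m : ℤ) * n) = (t ^ n) ^ m := by
          rw [← zpow_natCast t n, ← zpow_mul, mul_comm]
        rw [this]
        exact Subgroup.zpow_mem _ (Subgroup.mem_closure_singleton.mpr ⟨1, by group⟩) m
      have h1 : t ^ ((k : ℤ) * n) ∈ A ⊔ Subgroup.closure {t ^ n} :=
        Subgroup.mem_sup_right (htn k)
      have h2 : (t ^ ((k : ℤ) * n - k))⁻¹ * a * t ^ ((k : ℤ) * n - k) ∈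
          A ⊔ Subgroup.closure {t ^ n} := Subgroup.mem_sup_left ha'
      have h3 : t ^ ((k : ℤ) + j - k * n) ∈ A ⊔ Subgroup.closure {t ^ n} := by
        have : (k : ℤ) + j - k * n = (c - k) * n := by rw [← hc]; ring
        rw [this]
        exact Subgroup.mem_sup_right (htn (c - k))
      exact Subgroup.mul_mem _ (Subgroup.mul_mem _ h1 h2) h3
    · rw [sup_le_iff]
      constructor
      · intro a ha
        show Multiplicative.toAdd (ε a) ∈ AddSubgroup.zmultiples (n : ℤ)
        rw [hA a ha]
        exact ⟨0, by simp⟩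
      · rw [Subgroup.closure_le]
        intro x hx
        simp only [Set.mem_singleton_iff] at hx
        subst hx
        show Multiplicative.toAdd (ε (t ^ n)) ∈ AddSubgroup.zmultiples (n : ℤ)
        rw [map_pow, ht]
        exact ⟨1, by simp⟩
  refine ⟨key, ?_⟩
  classical
  rintro d ⟨S, hcard, hS⟩
  refine ⟨insert (t ^ n) S, ?_, ?_⟩
  · calc (insert (t ^ n) S).card ≤ S.card + 1 := Finset.card_insert_le _ _
      _ = d + 1 := by rw [hcard]
  · rw [key, Finset.coe_insert, Set.insert_eq, Subgroup.closure_union, hS,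
      sup_comm]
end
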